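/- Let κ, θ, σ > 0, let y₀ ∈ ℝ, let λᵐ : ℝ → ℝ be continuous, set Λᵐ(t) = ∫₀ᵗ λᵐ(s) ds, and define ψ(t) = λᵐ(t) + D(t) − y₀·E(t). Then for every t ≥ 0, exp(−∫₀ᵗ ψ(s) ds) · A(t) · e^{−B(t)·y₀} = e^{−Λᵐ(t)}. -/

import Mathlib

open Real intervalIntegral

/-- CIR++ auxiliary quantity `h = √(κ² + 2σ²)`. -/
noncomputable def cirH (κ σ : ℝ) : ℝ := Real.sqrt (κ ^ 2 + 2 * σ ^ 2)

/-- CIR++ function `A(0,u)`. -/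
noncomputable def cirA (κ θ σ : ℝ) (u : ℝ) : ℝ :=
  let h := cirH κ σ
  (2 * h * Real.exp ((κ + h) * u / 2) / (2 * h + (κ + h) * (Real.exp (u * h) - 1)))
    ^ (2 * κ * θ / σ ^ 2)

/-- CIR++ function `B(0,u)`. -/
noncomputable def cirB (κ σ : ℝ) (u : ℝ) : ℝ :=
  let h := cirH κ σ
  2 * (Real.exp (u * h) - 1) / (2 * h + (κ + h) * (Real.exp (u * h) - 1))

/-- CIR++ function `D(t) = d/dt ln A(0,t)`. -/
noncomputable def cirD (κ θ σ : ℝ) (t : ℝ) : ℝ :=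
  let h := cirH κ σ
  (2 * κ * θ / σ ^ 2) *
    ((κ + h) / 2 - h * (κ + h) * Real.exp (t * h) / (2 * h + (κ + h) * (Real.exp (t * h) - 1)))

/-- CIR++ function `E(t) = d/dt B(0,t)`. -/
noncomputable def cirE (κ σ : ℝ) (t : ℝ) : ℝ :=
  let h := cirH κ σ
  4 * h ^ 2 * Real.exp (t * h) / (2 * h + (κ + h) * (Real.exp (t * h) - 1)) ^ 2

/-!
`D` is the derivative of `log A` and `E` the derivative of `B`, and `A(0) = 1`, `B(0) = 0`.
By the fundamental theorem of calculus `∫₀ᵗ ψ = Λᵐ(t) + log A(t) − y₀ B(t)`, so the factors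
`A(t)` and `e^{−B(t) y₀}` cancel against `e^{−∫₀ᵗ ψ}`. All of this happens away from the zeros
of the common denominator `2h + (κ + h)(e^{uh} − 1)`, which is positive for `u ≥ 0` since `h > |κ|`.
-/

noncomputable def cirDen (κ σ : ℝ) (u : ℝ) : ℝ :=
  2 * cirH κ σ + (κ + cirH κ σ) * (exp (u * cirH κ σ) - 1)

noncomputable def cirLogA (κ θ σ : ℝ) (u : ℝ) : ℝ :=
  (2 * κ * θ / σ ^ 2) * (log (2 * cirH κ σ) + (κ + cirH κ σ) * u / 2 - log (cirDen κ σ u))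

section

variable {κ θ σ : ℝ}

lemma cirB_eq (u : ℝ) : cirB κ σ u = 2 * (exp (u * cirH κ σ) - 1) / cirDen κ σ u := rfl

lemma cirD_eq (u : ℝ) : cirD κ θ σ u = (2 * κ * θ / σ ^ 2) *
    ((κ + cirH κ σ) / 2 - cirH κ σ * (κ + cirH κ σ) * exp (u * cirH κ σ) / cirDen κ σ u) := rfl

lemma cirE_eq (u : ℝ) :
    cirE κ σ u = 4 * cirH κ σ ^ 2 * exp (u * cirH κ σ) / cirDen κ σ u ^ 2 := rfl

lemma cirA_eq (u : ℝ) : cirA κ θ σ u =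
    (2 * cirH κ σ * exp ((κ + cirH κ σ) * u / 2) / cirDen κ σ u) ^ (2 * κ * θ / σ ^ 2) := rfl

lemma cirH_pos (hσ : σ ≠ 0) : 0 < cirH κ σ :=
  sqrt_pos.mpr (by positivity)

lemma abs_lt_cirH (hσ : σ ≠ 0) : |κ| < cirH κ σ :=
  (lt_sqrt (abs_nonneg κ)).mpr (by rw [sq_abs]; exact lt_add_of_pos_right _ (by positivity))

lemma cirDen_pos (hσ : σ ≠ 0) {u : ℝ} (hu : 0 ≤ u) : 0 < cirDen κ σ u := by
  have hh := cirH_pos (κ := κ) hσ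
  have hκh : 0 < κ + cirH κ σ := by linarith [neg_abs_le κ, abs_lt_cirH (κ := κ) hσ]
  have hexp : 1 ≤ exp (u * cirH κ σ) := one_le_exp (by positivity)
  unfold cirDen
  nlinarith

lemma cirDen_zero : cirDen κ σ 0 = 2 * cirH κ σ := by
  simp [cirDen]

lemma continuous_cirDen : Continuous (cirDen κ σ) := by
  unfold cirDen; fun_prop

lemma hasDerivAt_cirDen (u : ℝ) :
    HasDerivAt (cirDen κ σ) ((κ + cirH κ σ) * (cirH κ σ * exp (u * cirH κ σ))) u := by
  have hexp := ((hasDerivAt_id' u).mul_const (cirH κ σ)).exp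
  exact (((hexp.sub_const 1).const_mul _).const_add _).congr_deriv (by ring)

lemma hasDerivAt_cirB {u : ℝ} (hu : cirDen κ σ u ≠ 0) :
    HasDerivAt (cirB κ σ) (cirE κ σ u) u := by
  have hexp := ((hasDerivAt_id' u).mul_const (cirH κ σ)).exp
  have hB := ((hexp.sub_const 1).const_mul 2).div (hasDerivAt_cirDen u) hu
  refine hB.congr_deriv ?_
  rw [cirE_eq, div_left_inj' (pow_ne_zero 2 hu), cirDen]
  ring

lemma hasDerivAt_cirLogA {u : ℝ} (hu : cirDen κ σ u ≠ 0) :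
    HasDerivAt (cirLogA κ θ σ) (cirD κ θ σ u) u := by
  have hlin := (((hasDerivAt_id' u).const_mul (κ + cirH κ σ)).div_const 2).const_add
    (log (2 * cirH κ σ))
  have hL := (hlin.sub ((hasDerivAt_cirDen u).log hu)).const_mul (2 * κ * θ / σ ^ 2)
  refine hL.congr_deriv ?_
  rw [cirD_eq]
  ring

lemma cirLogA_zero : cirLogA κ θ σ 0 = 0 := by
  simp [cirLogA, cirDen_zero]

lemma cirB_zero : cirB κ σ 0 = 0 := by
  simp [cirB]

lemma exp_cirLogA (hσ : σ ≠ 0) {u : ℝ} (hu : 0 ≤ u) :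
    exp (cirLogA κ θ σ u) = cirA κ θ σ u := by
  have hh := cirH_pos (κ := κ) hσ
  have hden := cirDen_pos (κ := κ) hσ hu
  rw [cirA_eq, rpow_def_of_pos (by positivity), log_div (by positivity) hden.ne',
    log_mul (by positivity) (exp_pos _).ne', log_exp, cirLogA, mul_comm]

lemma continuousOn_cirD (hσ : σ ≠ 0) : ContinuousOn (cirD κ θ σ) (Set.Ici 0) := by
  rw [show cirD κ θ σ = _ from funext cirD_eq]
  refine continuousOn_const.mul (continuousOn_const.sub ?_)
  exact (by fun_prop : Continuous _).continuousOn.div continuous_cirDen.continuousOn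
    fun u hu => (cirDen_pos hσ hu).ne'

lemma continuousOn_cirE (hσ : σ ≠ 0) : ContinuousOn (cirE κ σ) (Set.Ici 0) := by
  rw [show cirE κ σ = _ from funext cirE_eq]
  exact (by fun_prop : Continuous _).continuousOn.div (continuous_cirDen.pow 2).continuousOn
    fun u hu => pow_ne_zero 2 (cirDen_pos hσ hu).ne'

lemma uIcc_zero_subset_Ici {t : ℝ} (ht : 0 ≤ t) : Set.uIcc 0 t ⊆ Set.Ici 0 :=
  Set.uIcc_of_le ht ▸ Set.Icc_subset_Ici_self

lemma intervalIntegrable_cirD (hσ : σ ≠ 0) {t : ℝ} (ht : 0 ≤ t) :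
    IntervalIntegrable (cirD κ θ σ) MeasureTheory.volume 0 t :=
  ((continuousOn_cirD hσ).mono (uIcc_zero_subset_Ici ht)).intervalIntegrable

lemma intervalIntegrable_cirE (hσ : σ ≠ 0) {t : ℝ} (ht : 0 ≤ t) :
    IntervalIntegrable (cirE κ σ) MeasureTheory.volume 0 t :=
  ((continuousOn_cirE hσ).mono (uIcc_zero_subset_Ici ht)).intervalIntegrable

lemma integral_cirD (hσ : σ ≠ 0) {t : ℝ} (ht : 0 ≤ t) :
    ∫ s in (0 : ℝ)..t, cirD κ θ σ s = cirLogA κ θ σ t := by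
  rw [integral_eq_sub_of_hasDerivAt
    (fun u hu => hasDerivAt_cirLogA (cirDen_pos hσ (uIcc_zero_subset_Ici ht hu)).ne')
    (intervalIntegrable_cirD hσ ht), cirLogA_zero, sub_zero]

lemma integral_cirE (hσ : σ ≠ 0) {t : ℝ} (ht : 0 ≤ t) :
    ∫ s in (0 : ℝ)..t, cirE κ σ s = cirB κ σ t := by
  rw [integral_eq_sub_of_hasDerivAt
    (fun u hu => hasDerivAt_cirB (cirDen_pos hσ (uIcc_zero_subset_Ici ht hu)).ne')
    (intervalIntegrable_cirE hσ ht), cirB_zero, sub_zero]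

end

theorem cir_shift_fits_market_general (κ θ σ : ℝ) (hσ : 0 < σ)
    (y₀ : ℝ) (lamM : ℝ → ℝ) (hlamM : Continuous lamM)
    (ψ : ℝ → ℝ)
    (hψ : ∀ t, ψ t = lamM t + cirD κ θ σ t - y₀ * cirE κ σ t) :
    ∀ t : ℝ, 0 ≤ t →
      Real.exp (-(∫ s in (0:ℝ)..t, ψ s)) * cirA κ θ σ t * Real.exp (-(cirB κ σ t) * y₀)
        = Real.exp (-(∫ s in (0:ℝ)..t, lamM s)) := by
  intro t ht
  have hD := intervalIntegrable_cirD (κ := κ) (θ := θ) hσ.ne' ht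
  have hE := intervalIntegrable_cirE (κ := κ) hσ.ne' ht
  have hΛ : IntervalIntegrable lamM MeasureTheory.volume 0 t := hlamM.intervalIntegrable 0 t
  have hψint : ∫ s in (0:ℝ)..t, ψ s =
      (∫ s in (0:ℝ)..t, lamM s) + cirLogA κ θ σ t - y₀ * cirB κ σ t := by
    rw [funext hψ, integral_sub (hΛ.add hD) (hE.const_mul y₀), integral_add hΛ hD,
      integral_const_mul, integral_cirD hσ.ne' ht, integral_cirE hσ.ne' ht]
  rw [hψint, ← exp_cirLogA hσ.ne' ht, ← exp_add, ← exp_add]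
  congr 1
  ring

/-- With the shift `ψ(t) = λᵐ(t) + D(t) − y₀·E(t)`, the CIR++ model survival probability
`e^{−∫₀ᵗψ}·A(0,t)·e^{−B(0,t)y₀}` equals the market survival probability `e^{−Λᵐ(t)}`
for every `t ≥ 0`. -/
theorem cir_shift_fits_market (κ θ σ : ℝ) (hκ : 0 < κ) (hθ : 0 < θ) (hσ : 0 < σ)
    (y₀ : ℝ) (lamM : ℝ → ℝ) (hlamM : Continuous lamM)
    (ψ : ℝ → ℝ)
    (hψ : ∀ t, ψ t = lamM t + cirD κ θ σ t - y₀ * cirE κ σ t) :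
    ∀ t : ℝ, 0 ≤ t →
      Real.exp (-(∫ s in (0:ℝ)..t, ψ s)) * cirA κ θ σ t * Real.exp (-(cirB κ σ t) * y₀)
        = Real.exp (-(∫ s in (0:ℝ)..t, lamM s)) :=
  cir_shift_fits_market_general κ θ σ hσ y₀ lamM hlamM ψ hψ
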